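/- Assume every nodal concentration value is strictly positive (c⁺_{j−1/2} > 0 and c⁻_{j+1/2} > 0 for every cell j), that α̃ > D⁰_M/2 where D⁰_M is the maximum over 2 ≤ j ≤ N−1 of the four values D⁻_{j−1/2}, D⁺_{j−1/2}, D⁻_{j+1/2}, D⁺_{j+1/2}, and that for every 2 ≤ j ≤ N−1 both Λ(3D⁻_{j+1/2} + 6α̃) ≤ Φ_{j−1/2} and Λ(3D⁺_{j−1/2} + 6α̃) ≤ Φ_{j+1/2} hold. Then for every j with 2 ≤ j ≤ N−1 the diffusion part H_j^d := r̄_j/3 − λ(F̂_{j−1/2} − F̂_{j+1/2}) satisfies H_j^d > 0. -/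

import Mathlib

/-! Expanding the two fluxes writes `H_j^d` as a linear combination of the six nodal
concentrations of cells `j-1, j, j+1`. The condition `α̃ > D/2` makes the coefficients of the
outer traces nonnegative, the CFL conditions those of the traces of cell `j` itself, and the
coefficient `Λ(α̃ - D⁻_{j-1/2}/2)` of `c⁻_{j-1/2}` is strictly positive. -/

noncomputable section

namespace DG1D

/-- Gauss constant `μ₁ = (3+√3)/6`. -/
def mu1 : ℝ := (3 + Real.sqrt 3) / 6

/-- Gauss constant `μ₂ = (3-√3)/6`. -/
def mu2 : ℝ := (3 - Real.sqrt 3) / 6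

/-- Cell average `r̄_j = (r⁺_{j-1/2} + r⁻_{j+1/2})/2`.  Here `Φ j` denotes the nodal
porosity value `Φ_{j+1/2}` (so `Φ (j-1)` is `Φ_{j-1/2}`), `cP j` denotes the left-node
concentration trace `c⁺_{j-1/2}` of cell `j`, and `cM j` denotes the right-node trace
`c⁻_{j+1/2}` of cell `j`. -/
def rbar (Φ cP cM : ℕ → ℝ) (j : ℕ) : ℝ :=
  (cP j * Φ (j - 1) + cM j * Φ j) / 2

/-- Convective flux `ûc_{j+1/2} = u⁺_{j+1/2}·c⁺_{j+1/2} - α·[c]_{j+1/2}` at the interior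
node `j+1/2` (`u j` denotes `u⁺_{j+1/2}`; `c⁺_{j+1/2} = cP (j+1)`, `c⁻_{j+1/2} = cM j`). -/
def uc (u cP cM : ℕ → ℝ) (α : ℝ) (j : ℕ) : ℝ :=
  u j * cP (j + 1) - α * (cP (j + 1) - cM j)

/-- Diffusive flux `F̂_{j+1/2} = (D⁻·(c_x)⁻ + D⁺·(c_x)⁺)/2 + (α̃/Δx)·[c]_{j+1/2}` at the
interior node `j+1/2`, with `(c_x)⁻_{j+1/2} = (c⁻_{j+1/2} - c⁺_{j-1/2})/Δx` and
`(c_x)⁺_{j+1/2} = (c⁻_{j+3/2} - c⁺_{j+1/2})/Δx`. -/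
def Fhat (Dm Dp cP cM : ℕ → ℝ) (αt Δx : ℝ) (j : ℕ) : ℝ :=
  (Dm j * ((cM j - cP j) / Δx) + Dp j * ((cM (j + 1) - cP (j + 1)) / Δx)) / 2
    + (αt / Δx) * (cP (j + 1) - cM j)

/-- Value of the linear function `r` at Gauss point `i` of cell `j`:
`r(x_j^1) = μ₁·r⁺_{j-1/2} + μ₂·r⁻_{j+1/2}`, `r(x_j^2) = μ₂·r⁺_{j-1/2} + μ₁·r⁻_{j+1/2}`. -/
def rG (Φ cP cM : ℕ → ℝ) (j : ℕ) (i : Fin 2) : ℝ :=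
  if i = 0 then mu1 * (cP j * Φ (j - 1)) + mu2 * (cM j * Φ j)
  else mu2 * (cP j * Φ (j - 1)) + mu1 * (cM j * Φ j)

/-- Value of the linear function `c` at Gauss point `i` of cell `j`. -/
def cG (cP cM : ℕ → ℝ) (j : ℕ) (i : Fin 2) : ℝ :=
  if i = 0 then mu1 * cP j + mu2 * cM j else mu2 * cP j + mu1 * cM j

/-- Value of the linear interpolant of `Φ` at Gauss point `i` of cell `j`. -/
def phiG (Φ : ℕ → ℝ) (j : ℕ) (i : Fin 2) : ℝ :=
  if i = 0 then mu1 * Φ (j - 1) + mu2 * Φ j else mu2 * Φ (j - 1) + mu1 * Φ j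

/-- Convective flux with the boundary conventions `ûc_{1/2} = ûc_{N+1/2} = 0`. -/
def ucB (N : ℕ) (u cP cM : ℕ → ℝ) (α : ℝ) (j : ℕ) : ℝ :=
  if 1 ≤ j ∧ j ≤ N - 1 then uc u cP cM α j else 0

/-- Diffusive flux with the boundary conventions `F̂_{1/2} = F̂_{N+1/2} = 0`. -/
def FhatB (N : ℕ) (Dm Dp cP cM : ℕ → ℝ) (αt Δx : ℝ) (j : ℕ) : ℝ :=
  if 1 ≤ j ∧ j ≤ N - 1 then Fhat Dm Dp cP cM αt Δx j else 0

/-- Velocity flux `û_{j+1/2}` with boundary conventions `û_{1/2} = û_{N+1/2} = 0`. -/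
def uhatB (N : ℕ) (u : ℕ → ℝ) (j : ℕ) : ℝ :=
  if 1 ≤ j ∧ j ≤ N - 1 then u j else 0

/-- The Euler-forward cell-average update
`r̄_j^{new} = r̄_j + λ(ûc_{j-1/2} - ûc_{j+1/2}) - λ(F̂_{j-1/2} - F̂_{j+1/2})
  + (Δt/2)·∑_{i=1,2}(c̃_j^i·q_j^i - z₁·r(x_j^i)·P_j^i)`. -/
def rbarnew (N : ℕ) (Φ cP cM u Dm Dp : ℕ → ℝ) (q ct P : ℕ → Fin 2 → ℝ)
    (α αt z1 Δx Δt : ℝ) (j : ℕ) : ℝ :=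
  rbar Φ cP cM j
    + (Δt / Δx) * (ucB N u cP cM α (j - 1) - ucB N u cP cM α j)
    - (Δt / Δx) * (FhatB N Dm Dp cP cM αt Δx (j - 1) - FhatB N Dm Dp cP cM αt Δx j)
    + (Δt / 2) * ∑ i : Fin 2, (ct j i * q j i - z1 * rG Φ cP cM j i * P j i)

theorem diffusion_part_eq_nodal_combination (Φ cP cM Dm Dp : ℕ → ℝ) {αt Δx Δt Λ : ℝ}
    (hΔx : Δx ≠ 0) (hΛ : Λ * Δx ^ 2 = Δt) (j : ℕ) :
    rbar Φ cP cM (j + 1) / 3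
        - Δt / Δx * (Fhat Dm Dp cP cM αt Δx j - Fhat Dm Dp cP cM αt Δx (j + 1)) =
      Λ * (Dm j / 2) * cP j + Λ * (αt - Dm j / 2) * cM j
        + (Φ j / 6 - Λ * (Dm (j + 1) / 2 + αt) + Λ * (Dp j / 2)) * cP (j + 1)
        + (Φ (j + 1) / 6 - Λ * (Dp j / 2 + αt) + Λ * (Dm (j + 1) / 2)) * cM (j + 1)
        + Λ * (αt - Dp (j + 1) / 2) * cP (j + 2) + Λ * (Dp (j + 1) / 2) * cM (j + 2) := by
  subst hΛ
  simp only [rbar, Fhat, Nat.add_sub_cancel]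
  field_simp
  ring

theorem cfl_coeff_nonneg {Λ Φ D D' αt : ℝ} (hΛ : 0 ≤ Λ) (hD' : 0 ≤ D')
    (hCFL : Λ * (3 * D + 6 * αt) ≤ Φ) : 0 ≤ Φ / 6 - Λ * (D / 2 + αt) + Λ * (D' / 2) := by
  nlinarith [mul_nonneg hΛ hD']

theorem diffusion_part_positive_1d
    (N : ℕ) (Δx Δt : ℝ) (hΔx : 0 < Δx) (hΔt : 0 < Δt)
    (Φ cP cM Dm Dp : ℕ → ℝ) (αt : ℝ)
    (hDm : ∀ j, 1 ≤ j → j ≤ N - 1 → 0 ≤ Dm j)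
    (hDp : ∀ j, 1 ≤ j → j ≤ N - 1 → 0 ≤ Dp j)
    -- every nodal concentration value strictly positive
    (hc : ∀ j, 1 ≤ j → j ≤ N → 0 < cP j ∧ 0 < cM j)
    -- α̃ > D⁰_M/2, D⁰_M the max over 2 ≤ j ≤ N-1 of D∓_{j-1/2}, D∓_{j+1/2}
    (hαt : ∀ j, 2 ≤ j → j ≤ N - 1 →
      Dm (j - 1) / 2 < αt ∧ Dp (j - 1) / 2 < αt ∧ Dm j / 2 < αt ∧ Dp j / 2 < αt)
    -- Λ(3D⁻_{j+1/2} + 6α̃) ≤ Φ_{j-1/2} and Λ(3D⁺_{j-1/2} + 6α̃) ≤ Φ_{j+1/2}, 2 ≤ j ≤ N-1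
    (hCFL1 : ∀ j, 2 ≤ j → j ≤ N - 1 → (Δt / Δx ^ 2) * (3 * Dm j + 6 * αt) ≤ Φ (j - 1))
    (hCFL2 : ∀ j, 2 ≤ j → j ≤ N - 1 → (Δt / Δx ^ 2) * (3 * Dp (j - 1) + 6 * αt) ≤ Φ j) :
    ∀ j, 2 ≤ j → j ≤ N - 1 →
      0 < rbar Φ cP cM j / 3
            - (Δt / Δx) * (Fhat Dm Dp cP cM αt Δx (j - 1) - Fhat Dm Dp cP cM αt Δx j) := by
  intro j hj2 hjN
  obtain ⟨k, rfl⟩ : ∃ k, j = k + 1 := ⟨j - 1, by omega⟩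
  have hΛ : 0 < Δt / Δx ^ 2 := by positivity
  obtain ⟨hcP₀, hcM₀⟩ := hc k (by omega) (by omega)
  obtain ⟨hcP₁, hcM₁⟩ := hc (k + 1) (by omega) (by omega)
  obtain ⟨hcP₂, hcM₂⟩ := hc (k + 2) (by omega) (by omega)
  have hDm₀ := hDm k (by omega) (by omega)
  have hDp₀ := hDp k (by omega) (by omega)
  have hDm₁ := hDm (k + 1) (by omega) hjN
  have hDp₁ := hDp (k + 1) (by omega) hjN
  obtain ⟨hαm₀, -, -, hαp₁⟩ := hαt (k + 1) hj2 hjN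
  have hCFLm := hCFL1 (k + 1) hj2 hjN
  have hCFLp := hCFL2 (k + 1) hj2 hjN
  simp only [Nat.add_sub_cancel] at hαm₀ hCFLm hCFLp ⊢
  rw [diffusion_part_eq_nodal_combination Φ cP cM Dm Dp hΔx.ne'
    (div_mul_cancel₀ Δt (by positivity))]
  linarith [mul_nonneg (mul_nonneg hΛ.le (div_nonneg hDm₀ zero_le_two)) hcP₀.le,
    mul_pos (mul_pos hΛ (sub_pos.2 hαm₀)) hcM₀,
    mul_nonneg (cfl_coeff_nonneg hΛ.le hDp₀ hCFLm) hcP₁.le,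
    mul_nonneg (cfl_coeff_nonneg hΛ.le hDm₁ hCFLp) hcM₁.le,
    mul_nonneg (mul_nonneg hΛ.le (sub_nonneg.2 hαp₁.le)) hcP₂.le,
    mul_nonneg (mul_nonneg hΛ.le (div_nonneg hDp₁ zero_le_two)) hcM₂.le]

end DG1D
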